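/- arXiv:1005.2382 — 7 statements merged into one kernel-verified Lean document; each statement's English description precedes it below -/
import Mathlib

section
/- For every finite simple graph G, the triangle homomorphism density satisfies Goodman's inequality: t(K₃;G) ≥ 2·t(K₂;G)² − t(K₂;G). -/
open SimpleGraph Finset

/-- Homomorphism density: the probability that a uniformly random map `V(H) → V(G)`
is a graph homomorphism. -/
noncomputable def homDensity {α β : Type*} [Fintype α] [Fintype β]
    (H : SimpleGraph α) (G : SimpleGraph β) : ℝ :=
  (Nat.card {f : α → β // ∀ u v, H.Adj u v → G.Adj (f u) (f v)} : ℝ) /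
    (Fintype.card β : ℝ) ^ (Fintype.card α)

lemma homCount2 {β : Type*} [Fintype β] [DecidableEq β] (G : SimpleGraph β)
    [DecidableRel G.Adj] :
    Nat.card {f : Fin 2 → β // ∀ u v, (completeGraph (Fin 2)).Adj u v → G.Adj (f u) (f v)}
      = ∑ u, G.degree u := by
  have e : {f : Fin 2 → β // ∀ u v, (completeGraph (Fin 2)).Adj u v → G.Adj (f u) (f v)}
      ≃ {p : β × β // G.Adj p.1 p.2} := {
    toFun := fun f => ⟨(f.1 0, f.1 1), f.2 0 1 (by simp [completeGraph])⟩
    invFun := fun p => ⟨![p.1.1, p.1.2], by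
      intro u v h
      have hp := p.2
      fin_cases u <;> fin_cases v <;> simp_all [completeGraph] <;>
        first | exact hp | exact hp.symm⟩
    left_inv := fun f => by
      ext u
      fin_cases u <;> simp
    right_inv := fun p => rfl }
  rw [Nat.card_congr e, Nat.card_eq_fintype_card, Fintype.card_subtype]
  rw [Finset.card_filter, Fintype.sum_prod_type]
  refine Finset.sum_congr rfl fun u _ => ?_
  rw [← Finset.card_filter]
  simp [SimpleGraph.degree, neighborFinset_eq_filter]

lemma homCount3 {β : Type*} [Fintype β] [DecidableEq β] (G : SimpleGraph β)
    [DecidableRel G.Adj] :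
    Nat.card {f : Fin 3 → β // ∀ u v, (completeGraph (Fin 3)).Adj u v → G.Adj (f u) (f v)}
      = ∑ u, ∑ v, ∑ w, if G.Adj u v ∧ G.Adj u w ∧ G.Adj v w then 1 else 0 := by
  have e : {f : Fin 3 → β // ∀ u v, (completeGraph (Fin 3)).Adj u v → G.Adj (f u) (f v)}
      ≃ {t : β × β × β // G.Adj t.1 t.2.1 ∧ G.Adj t.1 t.2.2 ∧ G.Adj t.2.1 t.2.2} := {
    toFun := fun f => ⟨(f.1 0, f.1 1, f.1 2),
      f.2 0 1 (by simp [completeGraph]), f.2 0 2 (by simp [completeGraph]), f.2 1 2 (by simp [completeGraph])⟩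
    invFun := fun t => ⟨![t.1.1, t.1.2.1, t.1.2.2], by
      intro u v h
      obtain ⟨h1, h2, h3⟩ := t.2
      fin_cases u <;> fin_cases v <;> simp_all [completeGraph] <;>
        first | exact h1.symm | exact h2.symm | exact h3.symm⟩
    left_inv := fun f => by
      ext u
      fin_cases u <;> simp
    right_inv := fun t => rfl }
  rw [Nat.card_congr e, Nat.card_eq_fintype_card, Fintype.card_subtype]
  rw [Finset.card_filter, Fintype.sum_prod_type]
  refine Finset.sum_congr rfl fun u _ => ?_
  rw [Fintype.sum_prod_type]

lemma core_ineq {β : Type*} [Fintype β] [DecidableEq β] (G : SimpleGraph β)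
    [DecidableRel G.Adj] :
    2 * ∑ u, G.degree u * G.degree u ≤
      (∑ u, ∑ v, ∑ w, if G.Adj u v ∧ G.Adj u w ∧ G.Adj v w then 1 else 0)
        + Fintype.card β * ∑ u, G.degree u := by
  have hT : ∀ u v : β, (∑ w, if G.Adj u v ∧ G.Adj u w ∧ G.Adj v w then 1 else 0)
      = if G.Adj u v then (univ.filter fun w => G.Adj u w ∧ G.Adj v w).card else 0 := by
    intro u v
    by_cases h : G.Adj u v
    · simp only [h, true_and, if_true]
      rw [Finset.card_filter]
    · simp [h]
  have hM : Fintype.card β * ∑ u, G.degree u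
      = ∑ u : β, ∑ v : β, if G.Adj u v then Fintype.card β else 0 := by
    rw [Finset.mul_sum]
    refine Finset.sum_congr rfl fun u _ => ?_
    simp [Finset.sum_ite, SimpleGraph.degree, neighborFinset_eq_filter, mul_comm]
  have hdeg : ∀ u : β, G.degree u = (univ.filter (G.Adj u)).card := by
    intro u; simp [SimpleGraph.degree, neighborFinset_eq_filter]
  have h1 : ∀ u : β, (∑ v : β, if G.Adj u v then G.degree u else 0)
      = G.degree u * G.degree u := by
    intro u
    simp [Finset.sum_ite, ← hdeg u, mul_comm]
  have h2 : (∑ u : β, ∑ v : β, if G.Adj u v then G.degree v else 0)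
      = ∑ v, G.degree v * G.degree v := by
    rw [Finset.sum_comm]
    refine Finset.sum_congr rfl fun v _ => ?_
    have : ∀ u : β, (if G.Adj u v then G.degree v else 0)
        = (if G.Adj v u then G.degree v else 0) := by
      intro u; exact if_congr (G.adj_comm u v) rfl rfl
    simp_rw [this]
    simp [Finset.sum_ite, ← hdeg v, mul_comm]
  have hS : 2 * ∑ u, G.degree u * G.degree u
      = ∑ u : β, ∑ v : β, if G.Adj u v then G.degree u + G.degree v else 0 := by
    have : ∀ u v : β, (if G.Adj u v then G.degree u + G.degree v else 0)
        = (if G.Adj u v then G.degree u else 0) + (if G.Adj u v then G.degree v else 0) := by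
      intro u v; by_cases h : G.Adj u v <;> simp [h]
    simp_rw [this, Finset.sum_add_distrib, h2, h1]
    ring
  rw [hS, hM]
  simp_rw [hT]
  rw [← Finset.sum_add_distrib]
  refine Finset.sum_le_sum fun u _ => ?_
  rw [← Finset.sum_add_distrib]
  refine Finset.sum_le_sum fun v _ => ?_
  by_cases h : G.Adj u v
  · simp only [h, if_true]
    have key := Finset.card_inter_add_card_union (univ.filter (G.Adj u)) (univ.filter (G.Adj v))
    have hle : (univ.filter (G.Adj u) ∪ univ.filter (G.Adj v)).card ≤ Fintype.card β :=
      Finset.card_le_univ _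
    rw [hdeg u, hdeg v, ← key, ← Finset.filter_and]
    omega
  · simp [h]

/-- Goodman's inequality: `t(K₃;G) ≥ 2 t(K₂;G)² − t(K₂;G)`. -/
theorem stmt1 {β : Type*} [Fintype β] [Nonempty β] (G : SimpleGraph β) :
    homDensity (completeGraph (Fin 3)) G ≥
      2 * (homDensity (completeGraph (Fin 2)) G) ^ 2 -
        homDensity (completeGraph (Fin 2)) G := by
  classical
  set M : ℕ := ∑ u, G.degree u with hMdef
  set T : ℕ := ∑ u, ∑ v, ∑ w, if G.Adj u v ∧ G.Adj u w ∧ G.Adj v w then 1 else 0 with hTdef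
  set n : ℕ := Fintype.card β with hndef
  have hn : (0 : ℝ) < (n : ℝ) := by
    exact_mod_cast Fintype.card_pos
  have hcore : (2 : ℝ) * ∑ u, (G.degree u : ℝ) ^ 2 ≤ (T : ℝ) + (n : ℝ) * (M : ℝ) := by
    have hL : (2 : ℝ) * ∑ u, (G.degree u : ℝ) ^ 2
        = ((2 * ∑ u, G.degree u * G.degree u : ℕ) : ℝ) := by
      push_cast
      rw [Finset.mul_sum, Finset.mul_sum]
      exact Finset.sum_congr rfl fun u _ => by ring
    have hR : (T : ℝ) + (n : ℝ) * (M : ℝ) = ((T + n * M : ℕ) : ℝ) := by push_cast; ring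
    rw [hL, hR]
    exact_mod_cast core_ineq G
  have hcs : ((M : ℝ)) ^ 2 ≤ (n : ℝ) * ∑ u, (G.degree u : ℝ) ^ 2 := by
    have h := sq_sum_le_card_mul_sum_sq (s := (univ : Finset β)) (f := fun u => (G.degree u : ℝ))
    have hMc : ((M : ℝ)) = ∑ u, (G.degree u : ℝ) := by rw [hMdef]; push_cast; rfl
    rw [hMc]
    simpa [hndef] using h
  have key : 2 * (M : ℝ) ^ 2 - (n : ℝ) ^ 2 * (M : ℝ) ≤ (T : ℝ) * (n : ℝ) := by
    nlinarith [mul_le_mul_of_nonneg_right hcore hn.le, hcs]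
  have hD3 : homDensity (completeGraph (Fin 3)) G = (T : ℝ) / (n : ℝ) ^ 3 := by
    unfold homDensity
    rw [homCount3 G, ← hTdef, ← hndef]
    norm_num [Fintype.card_fin]
  have hD2 : homDensity (completeGraph (Fin 2)) G = (M : ℝ) / (n : ℝ) ^ 2 := by
    unfold homDensity
    rw [homCount2 G, ← hMdef, ← hndef]
    norm_num [Fintype.card_fin]
  rw [hD3, hD2, ge_iff_le]
  have h3 : (0 : ℝ) < (n : ℝ) ^ 3 := by positivity
  have h4 : (0 : ℝ) < (n : ℝ) ^ 4 := by positivity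
  have hrw : 2 * ((M : ℝ) / (n : ℝ) ^ 2) ^ 2 - (M : ℝ) / (n : ℝ) ^ 2
      = (2 * (M : ℝ) ^ 2 - (n : ℝ) ^ 2 * (M : ℝ)) / (n : ℝ) ^ 4 := by
    field_simp
  rw [hrw, div_le_div_iff₀ h4 h3]
  nlinarith [mul_le_mul_of_nonneg_right key h3.le]
end

section
/- The polynomial S(x,y,z) := x⁴y² + y⁴z² + z⁴x² − 3x²y²z² is nonnegative on all of ℝ³, but cannot be written as a finite sum of squares of real polynomials in x, y, z. -/
/-!
Nonnegativity is AM–GM for `x⁴y², y⁴z², z⁴x²`, whose geometric mean is `x²y²z²`.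

Suppose `S = ∑ qᵢ²`. A monomial `u` maximising a weight `w` over the supports of all the `qᵢ`,
ties broken lexicographically, is a vertex: `a + b = u + u` inside one support forces
`a = b = u`. So `x^{2u}` occurs in `∑ qᵢ²` with the positive coefficient `∑ coeff u (qᵢ)²`, and
every exponent `a` of every `qᵢ` satisfies `2 w(a) ≤ w(d)` for some `d` in the support of `S`
(half the Newton polytope). The weights `(1,1,1), (2,0,1), (1,2,0), (0,1,2)` already confine the
exponents so that `xyz · xyz` is the only way to write `x²y²z²` as a product of two of them.
Hence the coefficient of `x²y²z²` in `∑ qᵢ²` is `∑ coeff xyz (qᵢ)² ≥ 0`, while in `S` it is `-3`.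
-/

open MvPolynomial

/-- The polynomial `S(x,y,z) = x⁴y² + y⁴z² + z⁴x² − 3x²y²z²`. -/
noncomputable def polyS : MvPolynomial (Fin 3) ℝ :=
  X 0 ^ 4 * X 1 ^ 2 + X 1 ^ 4 * X 2 ^ 2 + X 2 ^ 4 * X 0 ^ 2 -
    3 * (X 0 ^ 2 * X 1 ^ 2 * X 2 ^ 2)

theorem three_mul_mul_le_cyclic {a b c : ℝ} (ha : 0 ≤ a) (hb : 0 ≤ b) (hc : 0 ≤ c) :
    3 * (a * b * c) ≤ a ^ 2 * b + b ^ 2 * c + c ^ 2 * a := by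
  nlinarith [mul_nonneg ha (sq_nonneg (b - c)), mul_nonneg hb (sq_nonneg (c - a)),
    mul_nonneg hc (sq_nonneg (a - b))]

theorem polyS_eval_nonneg (v : Fin 3 → ℝ) : 0 ≤ eval v polyS := by
  have h := three_mul_mul_le_cyclic (sq_nonneg (v 0)) (sq_nonneg (v 1)) (sq_nonneg (v 2))
  simp only [polyS, map_sub, map_add, map_mul, map_pow, eval_X, map_ofNat]
  linarith

section SumOfSquares

variable {σ ι R : Type*} [Fintype ι]

theorem coeff_add_self_sum_sq [CommSemiring R] {q : ι → MvPolynomial σ R} {u : σ →₀ ℕ}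
    (hu : ∀ i, ∀ a ∈ (q i).support, ∀ b ∈ (q i).support, a + b = u + u → a = u) :
    coeff (u + u) (∑ i, q i ^ 2) = ∑ i, coeff u (q i) ^ 2 := by
  classical
  rw [coeff_sum]
  refine Finset.sum_congr rfl fun i _ => ?_
  rw [sq, coeff_mul, sq]
  refine Finset.sum_eq_single (u, u) (fun ab hab hne => ?_)
    (fun h => (h (Finset.HasAntidiagonal.mem_antidiagonal.mpr rfl)).elim)
  by_contra hc
  have hsum := Finset.HasAntidiagonal.mem_antidiagonal.mp hab
  have h₁ := hu i _ (mem_support_iff.mpr (left_ne_zero_of_mul hc))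
    _ (mem_support_iff.mpr (right_ne_zero_of_mul hc)) hsum
  rw [h₁] at hsum
  exact hne (Prod.ext h₁ (add_left_cancel hsum))

theorem exists_coeff_add_self_sum_sq_pos [LinearOrder σ] [CommRing R] [LinearOrder R]
    [IsStrictOrderedRing R] (w : σ → ℕ) {q : ι → MvPolynomial σ R} {i : ι} {a : σ →₀ ℕ}
    (ha : a ∈ (q i).support) :
    ∃ u, Finsupp.weight w a ≤ Finsupp.weight w u ∧ 0 < coeff (u + u) (∑ i, q i ^ 2) := by
  let key : (σ →₀ ℕ) →+ ℕ ×ₗ Lex (σ →₀ ℕ) :=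
    { toFun := fun d => toLex (Finsupp.weight w d, toLex d)
      map_zero' := by simp
      map_add' := fun d e => by simp [← toLex_add] }
  have hkey : Function.Injective key := fun d e h =>
    congrArg (fun x : ℕ ×ₗ Lex (σ →₀ ℕ) => ofLex (ofLex x).2) h
  obtain ⟨⟨j, u⟩, hu, hmax⟩ := (Finset.univ.sigma fun i => (q i).support).exists_max_image
    (fun x => key x.2) ⟨⟨i, a⟩, Finset.mem_sigma.mpr ⟨Finset.mem_univ i, ha⟩⟩
  have hle : ∀ k, ∀ b ∈ (q k).support, key b ≤ key u := fun k b hb =>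
    hmax ⟨k, b⟩ (Finset.mem_sigma.mpr ⟨Finset.mem_univ k, hb⟩)
  have hvertex : ∀ k, ∀ b ∈ (q k).support, ∀ c ∈ (q k).support, b + c = u + u → b = u := by
    intro k b hb c hc hbc
    refine hkey (eq_of_le_of_not_lt (hle k b hb) fun hlt => ?_)
    have := add_lt_add_of_lt_of_le hlt (hle k c hc)
    rw [← map_add, ← map_add, hbc] at this
    exact lt_irrefl _ this
  have hju : coeff u (q j) ≠ 0 := mem_support_iff.mp (Finset.mem_sigma.mp hu).2
  refine ⟨u, ?_, ?_⟩
  · exact (Prod.Lex.le_iff.mp (hle i a ha)).elim le_of_lt fun h => h.1.le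
  · rw [coeff_add_self_sum_sq hvertex]
    exact Finset.sum_pos' (fun k _ => sq_nonneg _) ⟨j, Finset.mem_univ j, by positivity⟩

theorem two_mul_weight_le_weightedTotalDegree_sum_sq [LinearOrder σ] [CommRing R]
    [LinearOrder R] [IsStrictOrderedRing R] (w : σ → ℕ) {q : ι → MvPolynomial σ R} {i : ι}
    {a : σ →₀ ℕ} (ha : a ∈ (q i).support) :
    2 * Finsupp.weight w a ≤ weightedTotalDegree w (∑ i, q i ^ 2) := by
  obtain ⟨u, hau, hpos⟩ := exists_coeff_add_self_sum_sq_pos w ha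
  calc 2 * Finsupp.weight w a ≤ Finsupp.weight w (u + u) := by rw [map_add]; omega
    _ ≤ weightedTotalDegree w (∑ i, q i ^ 2) :=
      le_weightedTotalDegree w (mem_support_iff.mpr hpos.ne')

end SumOfSquares

section PolyS

open Finsupp

theorem polyS_eq_sum_monomial : polyS =
    monomial (single 0 4 + single 1 2) 1 + monomial (single 1 4 + single 2 2) 1
      + monomial (single 2 4 + single 0 2) 1
      - monomial (single 0 2 + single 1 2 + single 2 2) 3 := by
  simp only [polyS, X_pow_eq_monomial, monomial_mul, one_mul]
  rw [← map_ofNat C 3, C_mul_monomial, mul_one]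

theorem support_polyS : polyS.support ⊆
    {single 0 4 + single 1 2, single 1 4 + single 2 2, single 2 4 + single 0 2,
      single 0 2 + single 1 2 + single 2 2} := by
  classical
  rw [polyS_eq_sum_monomial]
  refine (support_sub _ _ _).trans
    (Finset.union_subset ?_ (support_monomial_subset.trans (by simp)))
  refine MvPolynomial.support_add.trans
    (Finset.union_subset ?_ (support_monomial_subset.trans (by simp)))
  refine MvPolynomial.support_add.trans
    (Finset.union_subset ?_ (support_monomial_subset.trans (by simp)))
  exact support_monomial_subset.trans (by simp)

theorem weightedTotalDegree_polyS_le (x y z : ℕ) :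
    weightedTotalDegree ![x, y, z] polyS ≤
      max (max (4 * x + 2 * y) (4 * y + 2 * z)) (max (4 * z + 2 * x) (2 * x + 2 * y + 2 * z)) := by
  refine Finset.sup_le fun d hd => ?_
  have hd := support_polyS hd
  simp only [Finset.mem_insert, Finset.mem_singleton] at hd
  rcases hd with rfl | rfl | rfl | rfl <;> simp [weight_single]

theorem weight_fin_three (x y z : ℕ) (d : Fin 3 →₀ ℕ) :
    weight ![x, y, z] d = d 0 * x + d 1 * y + d 2 * z := by
  simp [weight_apply, sum_fintype, Fin.sum_univ_three]

variable {ι : Type*} [Fintype ι]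

theorem exponent_bounds_of_polyS_eq_sum_sq {q : ι → MvPolynomial (Fin 3) ℝ}
    (hS : polyS = ∑ i, q i ^ 2) {i : ι} {a : Fin 3 →₀ ℕ} (ha : a ∈ (q i).support) :
    a 0 + a 1 + a 2 ≤ 3 ∧ 2 * a 0 + a 2 ≤ 4 ∧ 2 * a 1 + a 0 ≤ 4 ∧ 2 * a 2 + a 1 ≤ 4 := by
  have bound (x y z : ℕ) := (two_mul_weight_le_weightedTotalDegree_sum_sq ![x, y, z] ha).trans
    (hS ▸ weightedTotalDegree_polyS_le x y z)
  have h₁ := bound 1 1 1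
  have h₂ := bound 2 0 1
  have h₃ := bound 1 2 0
  have h₄ := bound 0 1 2
  norm_num [weight_fin_three] at h₁ h₂ h₃ h₄
  omega

local notation "xyz" => single 0 1 + single 1 1 + single 2 1

theorem eq_xyz_of_add_eq {q : ι → MvPolynomial (Fin 3) ℝ} (hS : polyS = ∑ i, q i ^ 2) {i : ι}
    {a b : Fin 3 →₀ ℕ} (ha : a ∈ (q i).support) (hb : b ∈ (q i).support)
    (hab : a + b = xyz + xyz) : a = xyz := by
  have ha' := exponent_bounds_of_polyS_eq_sum_sq hS ha
  have hb' := exponent_bounds_of_polyS_eq_sum_sq hS hb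
  have h₀ := DFunLike.congr_fun hab 0
  have h₁ := DFunLike.congr_fun hab 1
  have h₂ := DFunLike.congr_fun hab 2
  simp only [Finsupp.coe_add, Pi.add_apply, single_apply, Fin.reduceEq, ↓reduceIte] at h₀ h₁ h₂
  ext k
  fin_cases k <;>
    simp only [Fin.zero_eta, Fin.mk_one, Fin.reduceFinMk, Finsupp.coe_add, Pi.add_apply,
      single_apply, Fin.reduceEq, ↓reduceIte] <;>
    omega

theorem coeff_xyz_add_xyz_polyS : coeff (xyz + xyz) polyS = -3 := by
  rw [polyS_eq_sum_monomial]
  simp [coeff_monomial, Finsupp.ext_iff, Fin.forall_fin_succ]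

theorem polyS_ne_sum_sq (q : ι → MvPolynomial (Fin 3) ℝ) : polyS ≠ ∑ i, q i ^ 2 := by
  intro hS
  have hcoeff := coeff_add_self_sum_sq (q := q) fun _ _ ha _ hb hab => eq_xyz_of_add_eq hS ha hb hab
  rw [← hS, coeff_xyz_add_xyz_polyS] at hcoeff
  linarith [Finset.sum_nonneg fun i (_ : i ∈ Finset.univ) => sq_nonneg (coeff xyz (q i))]

end PolyS

theorem stmt5 :
    (∀ v : Fin 3 → ℝ, 0 ≤ eval v polyS) ∧
    ¬ ∃ (m : ℕ) (q : Fin m → MvPolynomial (Fin 3) ℝ), polyS = ∑ i, q i ^ 2 :=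
  ⟨polyS_eval_nonneg, fun ⟨_, q, hS⟩ => polyS_ne_sum_sq q hS⟩
end

section
/- For every k ≥ 4 there exists a nonnegative homogeneous polynomial p in k variables such that x₁²x₂²⋯x_k² divides p, p is not a sum of squares of polynomials, and (1,0,…,0) is a bad point for p, i.e., every polynomial q with q²p a sum of squares of polynomials vanishes at (1,0,…,0). In particular, p := x₁²x₂²⋯x_k² · (x₂⁴x₃² + x₃⁴x₄² + x₄⁴x₂² − 3x₂²x₃²x₄²) has these properties. -/
/-!
Let `S = x⁴y² + y⁴z² + z⁴x² - 3x²y²z²` be the Choi–Lam form in `x₁, x₂, x₃`; it is nonnegative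
by AM–GM. Comparing `w`-top weighted components shows that if `∑ qᵢ² = F`, every monomial `m` of
every `qᵢ` satisfies `2⟨w, m⟩ ≤ ⟨w, d⟩` for some monomial `d` of `F` (the Newton polytope of
`F` contains `2m`). For `F = S` this leaves only `x²y, y²z, z²x, xyz` in the `qᵢ`, and then the
coefficient `-3` of `x²y²z²` would equal `∑ (coeff of xyz in qᵢ)² ≥ 0`, so `S` is not a sum of
squares.

If `q² (∏ xᵢ²) S` is a sum of squares `∑ rᵢ²`, the same bound with the weights `-eⱼ` shows that
`∏ xᵢ` divides every `rᵢ`, so `q² S` is a sum of squares. Setting `x₀ = 1` fixes `S` and turns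
`q` into `q̃` with `q̃(0) = q(1, 0, …, 0)`; the lowest-degree parts of `q̃² S = ∑ r̃ᵢ²` then give
`q̃(0)² S = ∑ (lowest part of r̃ᵢ)²`, so `q(1, 0, …, 0) ≠ 0` would make `S` a sum of squares.
-/

open MvPolynomial

/-- A polynomial is a sum of squares of polynomials. -/
def IsSOS {k : ℕ} (p : MvPolynomial (Fin k) ℝ) : Prop :=
  ∃ (m : ℕ) (q : Fin m → MvPolynomial (Fin k) ℝ), p = ∑ i, q i ^ 2

open Finsupp

namespace MvPolynomial

section WeightedComponent

variable {σ R Γ : Type*} [CommSemiring R] [AddCommMonoid Γ] (w : σ → Γ)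

lemma weight_le_of_mem_support_mul [PartialOrder Γ] [IsOrderedAddMonoid Γ]
    {f g : MvPolynomial σ R} {a b : Γ}
    (hf : ∀ m ∈ f.support, weight w m ≤ a) (hg : ∀ m ∈ g.support, weight w m ≤ b) :
    ∀ m ∈ (f * g).support, weight w m ≤ a + b := by
  classical
  intro m hm
  obtain ⟨x, hx, y, hy, rfl⟩ := Finset.mem_add.1 (support_mul f g hm)
  rw [map_add]
  exact add_le_add (hf x hx) (hg y hy)

lemma weightedHomogeneousComponent_mul_of_le [LinearOrder Γ] [IsOrderedCancelAddMonoid Γ]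
    {f g : MvPolynomial σ R} {a b : Γ}
    (hf : ∀ m ∈ f.support, weight w m ≤ a) (hg : ∀ m ∈ g.support, weight w m ≤ b) :
    weightedHomogeneousComponent w (a + b) (f * g) =
      weightedHomogeneousComponent w a f * weightedHomogeneousComponent w b g := by
  classical
  ext n
  simp only [coeff_weightedHomogeneousComponent, coeff_mul]
  split_ifs with hn
  · refine Finset.sum_congr rfl fun ⟨x, y⟩ hxy => ?_
    rw [Finset.HasAntidiagonal.mem_antidiagonal] at hxy
    by_cases hfx : coeff x f = 0
    · simp [hfx]
    by_cases hgy : coeff y g = 0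
    · simp [hgy]
    have hx := hf x (mem_support_iff.2 hfx)
    have hy := hg y (mem_support_iff.2 hgy)
    have hsum : weight w x + weight w y = a + b := by rw [← map_add, hxy, hn]
    have hxa : weight w x = a :=
      hx.antisymm (le_of_not_gt fun hlt => hsum.not_lt (add_lt_add_of_lt_of_le hlt hy))
    have hyb : weight w y = b :=
      hy.antisymm (le_of_not_gt fun hlt => hsum.not_lt (add_lt_add_of_le_of_lt hx hlt))
    rw [if_pos hxa, if_pos hyb]
  · refine (Finset.sum_eq_zero fun ⟨x, y⟩ hxy => ?_).symm
    rw [Finset.HasAntidiagonal.mem_antidiagonal] at hxy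
    split_ifs with hx hy
    · exact absurd (by rw [← hxy, map_add, hx, hy]) hn
    all_goals simp

lemma weight_neg_one (m : σ →₀ ℕ) : weight (fun _ : σ => (-1 : ℤ)) m = -(m.degree : ℤ) := by
  simp [weight_apply, degree_apply, Finsupp.sum]

lemma weightedHomogeneousComponent_neg_one_zero (q : MvPolynomial σ R) :
    weightedHomogeneousComponent (fun _ : σ => (-1 : ℤ)) 0 q = C (constantCoeff q) := by
  classical
  ext d
  rw [coeff_weightedHomogeneousComponent, weight_neg_one, coeff_C, constantCoeff_eq]
  by_cases hd : d = 0
  · simp [hd]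
  · simp [hd, Ne.symm hd, degree_eq_zero_iff]

end WeightedComponent

lemma coeff_add_self_sq {σ R : Type*} [CommSemiring R] {f : MvPolynomial σ R} {ν : σ →₀ ℕ}
    (h : ∀ u ∈ f.support, ∀ v ∈ f.support, u + v = ν + ν → u = ν) :
    coeff (ν + ν) (f ^ 2) = coeff ν f ^ 2 := by
  classical
  rw [sq, sq, coeff_mul, Finset.sum_eq_single_of_mem (ν, ν) (by simp)]
  rintro ⟨u, v⟩ huv hne
  rw [Finset.HasAntidiagonal.mem_antidiagonal] at huv
  dsimp only at huv hne ⊢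
  by_contra hz
  have hu := h u (mem_support_iff.2 (left_ne_zero_of_mul hz)) v
    (mem_support_iff.2 (right_ne_zero_of_mul hz)) huv
  subst hu
  exact hne (by rw [add_left_cancel huv])

section SumSq

variable {σ ι : Type*} [Fintype ι]

lemma eq_zero_of_sum_sq_eq_zero {r : ι → MvPolynomial σ ℝ} (h : ∑ i, r i ^ 2 = 0) (i : ι) :
    r i = 0 := by
  refine funext fun v => ?_
  have hv : ∑ j, eval v (r j) ^ 2 = 0 := by simpa using congrArg (eval v) h
  simpa using (Finset.sum_eq_zero_iff_of_nonneg fun j _ => sq_nonneg _).1 hv i (Finset.mem_univ i)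

variable {Γ : Type*} [AddCommMonoid Γ] [LinearOrder Γ] [IsOrderedCancelAddMonoid Γ] (w : σ → Γ)

lemma exists_weightedHomogeneousComponent_sum_sq {r : ι → MvPolynomial σ ℝ} {i : ι}
    {m : σ →₀ ℕ} (hm : m ∈ (r i).support) :
    ∃ W, weight w m ≤ W ∧ (∀ d ∈ (∑ j, r j ^ 2).support, weight w d ≤ W + W) ∧
      weightedHomogeneousComponent w (W + W) (∑ j, r j ^ 2) =
        ∑ j, weightedHomogeneousComponent w W (r j) ^ 2 ∧
      weightedHomogeneousComponent w (W + W) (∑ j, r j ^ 2) ≠ 0 := by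
  classical
  set T := Finset.univ.biUnion fun j => (r j).support
  have hmT : m ∈ T := Finset.mem_biUnion.2 ⟨i, Finset.mem_univ _, hm⟩
  obtain ⟨m₀, hm₀T, hW⟩ := T.exists_mem_eq_sup' ⟨m, hmT⟩ (weight w)
  set W := T.sup' ⟨m, hmT⟩ (weight w)
  have hle : ∀ j, ∀ m' ∈ (r j).support, weight w m' ≤ W := fun j m' hm' =>
    T.le_sup' _ (Finset.mem_biUnion.2 ⟨j, Finset.mem_univ _, hm'⟩)
  have htop : weightedHomogeneousComponent w (W + W) (∑ j, r j ^ 2) =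
      ∑ j, weightedHomogeneousComponent w W (r j) ^ 2 := by
    simp only [map_sum, sq]
    exact Finset.sum_congr rfl fun j _ => weightedHomogeneousComponent_mul_of_le w (hle j) (hle j)
  refine ⟨W, T.le_sup' _ hmT, fun d hd => ?_, htop, ?_⟩
  · obtain ⟨j, -, hj⟩ := Finset.mem_biUnion.1 (support_sum hd)
    exact weight_le_of_mem_support_mul w (hle j) (hle j) d (by rwa [← sq])
  · obtain ⟨j₀, -, hm₀⟩ := Finset.mem_biUnion.1 hm₀T
    rw [htop]
    intro h
    have := congrArg (coeff m₀) (eq_zero_of_sum_sq_eq_zero h j₀)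
    rw [coeff_weightedHomogeneousComponent, if_pos hW.symm, coeff_zero] at this
    exact mem_support_iff.1 hm₀ this

lemma exists_mem_support_sum_sq_weight_le {r : ι → MvPolynomial σ ℝ} {i : ι}
    {m : σ →₀ ℕ} (hm : m ∈ (r i).support) :
    ∃ d ∈ (∑ j, r j ^ 2).support, weight w (m + m) ≤ weight w d := by
  obtain ⟨W, hmW, -, -, hne⟩ := exists_weightedHomogeneousComponent_sum_sq w hm
  obtain ⟨d, hd⟩ := support_nonempty.2 hne
  rw [support_weightedHomogeneousComponent, Finset.mem_filter] at hd
  exact ⟨d, hd.1, by rw [map_add, hd.2]; exact add_le_add hmW hmW⟩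

lemma exists_sum_sq_of_sq_mul_eq_sum_sq {q F : MvPolynomial σ ℝ} {D : ℕ} (hF : F.IsHomogeneous D)
    (hq : constantCoeff q ≠ 0) {r : ι → MvPolynomial σ ℝ} (h : q ^ 2 * F = ∑ i, r i ^ 2) :
    ∃ s : ι → MvPolynomial σ ℝ, F = ∑ i, s i ^ 2 := by
  classical
  rcases eq_or_ne F 0 with rfl | hF0
  · exact ⟨0, by simp⟩
  have hqF : C (constantCoeff q ^ 2) * F ≠ 0 :=
    mul_ne_zero (by simpa using hq) hF0
  obtain ⟨i, -, hi⟩ := Finset.exists_ne_zero_of_sum_ne_zero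
    (h ▸ mul_ne_zero (pow_ne_zero 2 fun h0 => hq (by simp [h0])) hF0)
  obtain ⟨m, hm⟩ := support_nonempty.2 (ne_zero_pow two_ne_zero hi)
  -- the lowest-degree part is the top part for the weight `-1`
  set w : σ → ℤ := fun _ => -1
  have hw_nonpos : ∀ m, weight w m ≤ 0 := fun m => by rw [weight_neg_one]; omega
  have hFw : ∀ m ∈ F.support, weight w m = -D := fun m hm => by
    rw [weight_neg_one, hF.degree_eq_sum_deg_support hm, degree_apply]
  have hq0 : weightedHomogeneousComponent w 0 q = C (constantCoeff q) :=
    weightedHomogeneousComponent_neg_one_zero q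
  have hq2 : weightedHomogeneousComponent w 0 (q ^ 2) = C (constantCoeff q ^ 2) := by
    simpa [← sq, hq0] using weightedHomogeneousComponent_mul_of_le w (f := q) (g := q)
      (a := 0) (b := 0) (fun m _ => hw_nonpos m) (fun m _ => hw_nonpos m)
  have hlow : weightedHomogeneousComponent w (-D) (q ^ 2 * F) = C (constantCoeff q ^ 2) * F := by
    have := weightedHomogeneousComponent_mul_of_le w (f := q ^ 2) (g := F) (a := 0) (b := -D)
      (fun m _ => hw_nonpos m) (fun m hm => (hFw m hm).le)
    rwa [zero_add, hq2,
      weightedHomogeneousComponent_eq_self fun m hm => hFw m (mem_support_iff.2 hm)] at this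
  obtain ⟨W, -, hle, htop, hne⟩ := exists_weightedHomogeneousComponent_sum_sq w hm
  have hWD : W + W = -D := by
    refine le_antisymm (not_lt.1 fun hlt => hne ?_) (not_lt.1 fun hlt => hqF ?_)
    · rw [← h]
      exact weightedHomogeneousComponent_eq_zero' _ _ fun d hd => (lt_of_le_of_lt
        (weight_le_of_mem_support_mul w (fun m _ => hw_nonpos m) (fun m hm => (hFw m hm).le) d hd)
        (by simpa using hlt)).ne
    · rw [← hlow, h]
      exact weightedHomogeneousComponent_eq_zero' _ _ fun d hd =>
        (lt_of_le_of_lt (hle d hd) hlt).ne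
  have hkey : C (constantCoeff q ^ 2) * F = ∑ i, weightedHomogeneousComponent w W (r i) ^ 2 := by
    rw [← hlow, h, ← hWD, htop]
  refine ⟨fun i => C (constantCoeff q)⁻¹ * weightedHomogeneousComponent w W (r i), ?_⟩
  calc F = C ((constantCoeff q)⁻¹ ^ 2) * (C (constantCoeff q ^ 2) * F) := by
        rw [← mul_assoc, ← map_mul, ← mul_pow, inv_mul_cancel₀ hq, one_pow, map_one, one_mul]
    _ = _ := by rw [hkey, Finset.mul_sum]; simp only [mul_pow, map_pow]

lemma exists_sum_sq_of_monomial_sq_mul_eq_sum_sq {s : σ →₀ ℕ} {B : MvPolynomial σ ℝ}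
    {r : ι → MvPolynomial σ ℝ} (h : monomial s 1 ^ 2 * B = ∑ i, r i ^ 2) :
    ∃ t : ι → MvPolynomial σ ℝ, B = ∑ i, t i ^ 2 := by
  classical
  have hle : ∀ d ∈ (monomial s 1 ^ 2 * B).support, s + s ≤ d := by
    intro d hd
    rw [monomial_pow, mem_support_iff, coeff_monomial_mul'] at hd
    split_ifs at hd with hsd
    · simpa [two_nsmul] using hsd
    · exact absurd rfl hd
  have hdvd : ∀ i, monomial s (1 : ℝ) ∣ r i := by
    intro i
    rw [← Ideal.mem_span_singleton, ← Set.image_singleton (f := fun s' => monomial s' (1 : ℝ)),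
      mem_ideal_span_monomial_image]
    intro m hm
    refine ⟨s, rfl, fun j => ?_⟩
    obtain ⟨d, hd, hmd⟩ := exists_mem_support_sum_sq_weight_le (Pi.single j (-1 : ℤ)) hm
    have hsd := hle d (h ▸ hd) j
    simp only [weight_single_index, Finsupp.add_apply, smul_neg, nsmul_eq_mul, mul_one] at hmd hsd
    push_cast at hmd
    omega
  choose t ht using hdvd
  refine ⟨t, mul_left_cancel₀ (pow_ne_zero 2 (by simp) : monomial s (1 : ℝ) ^ 2 ≠ 0) ?_⟩
  rw [h, Finset.mul_sum]
  exact Finset.sum_congr rfl fun i _ => by rw [ht i]; ring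

end SumSq

section ChoiLam

variable {σ ι : Type*} [Fintype ι] {a b c : σ}

noncomputable def choiLamForm (a b c : σ) : MvPolynomial σ ℝ :=
  X a ^ 4 * X b ^ 2 + X b ^ 4 * X c ^ 2 + X c ^ 4 * X a ^ 2 - 3 * (X a ^ 2 * X b ^ 2 * X c ^ 2)

lemma eval_choiLamForm_nonneg (v : σ → ℝ) : 0 ≤ eval v (choiLamForm a b c) := by
  simp only [choiLamForm, map_sub, map_add, map_mul, map_pow, eval_X, map_ofNat]
  nlinarith [mul_nonneg (sq_nonneg (v a)) (sq_nonneg (v b ^ 2 - v c ^ 2)),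
    mul_nonneg (sq_nonneg (v b)) (sq_nonneg (v c ^ 2 - v a ^ 2)),
    mul_nonneg (sq_nonneg (v c)) (sq_nonneg (v a ^ 2 - v b ^ 2)),
    sq_nonneg (v a ^ 2 * v b - v b ^ 2 * v c), sq_nonneg (v b ^ 2 * v c - v c ^ 2 * v a),
    sq_nonneg (v c ^ 2 * v a - v a ^ 2 * v b)]

lemma choiLamForm_eq_sum_monomial : choiLamForm a b c =
    monomial (single a 4 + single b 2) 1 + monomial (single b 4 + single c 2) 1 +
      monomial (single c 4 + single a 2) 1 - monomial (single a 2 + single b 2 + single c 2) 3 := by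
  simp only [choiLamForm, X_pow_eq_monomial, monomial_mul, mul_one]
  rw [show (3 : MvPolynomial σ ℝ) = C 3 from (map_ofNat C 3).symm, C_mul_monomial, mul_one]

lemma isHomogeneous_choiLamForm : (choiLamForm a b c).IsHomogeneous 6 := by
  rw [choiLamForm_eq_sum_monomial]
  refine (((isHomogeneous_monomial _ ?_).add (isHomogeneous_monomial _ ?_)).add
    (isHomogeneous_monomial _ ?_)).sub (isHomogeneous_monomial _ ?_) <;> simp

lemma mem_support_choiLamForm {m : σ →₀ ℕ} (hm : m ∈ (choiLamForm a b c).support) :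
    m = single a 4 + single b 2 ∨ m = single b 4 + single c 2 ∨ m = single c 4 + single a 2 ∨
      m = single a 2 + single b 2 + single c 2 := by
  classical
  rw [mem_support_iff, choiLamForm_eq_sum_monomial] at hm
  by_contra! h
  exact hm (by simp [coeff_monomial, Ne.symm h.1, Ne.symm h.2.1, Ne.symm h.2.2.1, Ne.symm h.2.2.2])

lemma coeff_choiLamForm (hab : a ≠ b) (hbc : b ≠ c) (hac : a ≠ c) :
    coeff (single a 2 + single b 2 + single c 2) (choiLamForm a b c) = -3 := by
  classical
  have hne : ∀ {x y z : ℕ}, x ≠ 2 ∨ y ≠ 2 ∨ z ≠ 2 →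
      single a x + single b y + single c z ≠ single a 2 + single b 2 + single c 2 := by
    intro x y z hxyz h
    have ha := DFunLike.congr_fun h a
    have hb := DFunLike.congr_fun h b
    have hc := DFunLike.congr_fun h c
    simp [hab, hbc, hac, hab.symm, hbc.symm, hac.symm] at ha hb hc
    omega
  rw [choiLamForm_eq_sum_monomial]
  have h1 := hne (x := 4) (y := 2) (z := 0) (by omega)
  have h2 := hne (x := 0) (y := 4) (z := 2) (by omega)
  have h3 := hne (x := 2) (y := 0) (z := 4) (by omega)
  simp only [single_zero, add_zero, zero_add] at h1 h2 h3
  rw [add_comm (single a 2)] at h3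
  simp [coeff_monomial, h1, h2, h3]

lemma exponents_of_sum_sq_eq_choiLamForm (hab : a ≠ b) (hbc : b ≠ c) (hac : a ≠ c)
    {q : ι → MvPolynomial σ ℝ} (hq : ∑ i, q i ^ 2 = choiLamForm a b c) {i : ι} {m : σ →₀ ℕ}
    (hm : m ∈ (q i).support) :
    (∀ j, j ≠ a → j ≠ b → j ≠ c → m j = 0) ∧ m a + m b + m c = 3 ∧
      m a ≤ 2 * m b + 1 ∧ m b ≤ 2 * m c + 1 ∧ m c ≤ 2 * m a + 1 := by
  classical
  -- `2m` lies in the Newton polytope of the form, i.e. `m` lies in the triangle with vertices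
  -- `(2,1,0), (0,2,1), (1,0,2)`; the five weights below cut that triangle out.
  have hnewton : ∀ w : σ → ℤ, 2 * weight w m ≤ 4 * w a + 2 * w b ∨
      2 * weight w m ≤ 4 * w b + 2 * w c ∨ 2 * weight w m ≤ 4 * w c + 2 * w a ∨
      2 * weight w m ≤ 2 * w a + 2 * w b + 2 * w c := by
    intro w
    obtain ⟨d, hd, hmd⟩ := exists_mem_support_sum_sq_weight_le w hm
    rw [map_add, ← two_mul] at hmd
    rcases mem_support_choiLamForm (hq ▸ hd) with rfl | rfl | rfl | rfl <;>
      simp [weight_single] at hmd <;> omega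
  have hout : ∀ j, j ≠ a → j ≠ b → j ≠ c → m j = 0 := by
    intro j hja hjb hjc
    have := hnewton (Pi.single j 1)
    simp [weight_single_index, hja.symm, hjb.symm, hjc.symm] at this
    omega
  have hm_eq : m = single a (m a) + single b (m b) + single c (m c) := by
    ext j
    by_cases hja : j = a
    · subst hja; simp [hab, hac]
    by_cases hjb : j = b
    · subst hjb; simp [hab.symm, hbc]
    by_cases hjc : j = c
    · subst hjc; simp [hac.symm, hbc.symm]
    simp [hout j hja hjb hjc, Ne.symm hja, Ne.symm hjb, Ne.symm hjc]
  have hlin : ∀ A B C : ℤ, 2 * (m a * A + m b * B + m c * C) ≤ 4 * A + 2 * B ∨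
      2 * (m a * A + m b * B + m c * C) ≤ 4 * B + 2 * C ∨
      2 * (m a * A + m b * B + m c * C) ≤ 4 * C + 2 * A ∨
      2 * (m a * A + m b * B + m c * C) ≤ 2 * A + 2 * B + 2 * C := by
    intro A B C
    have := hnewton fun j => if j = a then A else if j = b then B else if j = c then C else 0
    rw [hm_eq] at this
    simpa [weight_single, hab, hbc, hac, hab.symm, hbc.symm, hac.symm] using this
  have h1 := hlin 1 1 1
  have h2 := hlin (-1) (-1) (-1)
  have h3 := hlin 1 (-2) 0
  have h4 := hlin 0 1 (-2)
  have h5 := hlin (-2) 0 1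
  refine ⟨hout, ?_, ?_, ?_, ?_⟩ <;> omega

lemma sum_sq_ne_choiLamForm (hab : a ≠ b) (hbc : b ≠ c) (hac : a ≠ c)
    (q : ι → MvPolynomial σ ℝ) :
    ∑ i, q i ^ 2 ≠ choiLamForm a b c := by
  classical
  intro hq
  set ν : σ →₀ ℕ := single a 1 + single b 1 + single c 1
  have hνν : ν + ν = single a 2 + single b 2 + single c 2 := by
    ext j
    simp only [ν, Finsupp.add_apply, single_apply]
    split_ifs <;> omega
  -- `ν = (1,1,1)` is the only point `u` of the triangle with `(2,2,2) - u` in it as well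
  have hsq : ∀ i, coeff (ν + ν) (q i ^ 2) = coeff ν (q i) ^ 2 := by
    intro i
    refine coeff_add_self_sq fun u hu v hv huv => ?_
    obtain ⟨hu0, hu⟩ := exponents_of_sum_sq_eq_choiLamForm hab hbc hac hq hu
    obtain ⟨hv0, hv⟩ := exponents_of_sum_sq_eq_choiLamForm hab hbc hac hq hv
    have ha := DFunLike.congr_fun huv a
    have hb := DFunLike.congr_fun huv b
    have hc := DFunLike.congr_fun huv c
    simp [ν, hab, hbc, hac, hab.symm, hbc.symm, hac.symm] at ha hb hc
    ext j
    by_cases hja : j = a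
    · subst hja; simp [ν, hab, hac]; omega
    by_cases hjb : j = b
    · subst hjb; simp [ν, hab.symm, hbc]; omega
    by_cases hjc : j = c
    · subst hjc; simp [ν, hac.symm, hbc.symm]; omega
    simp [ν, hu0 j hja hjb hjc, Ne.symm hja, Ne.symm hjb, Ne.symm hjc]
  have hcoeff := coeff_choiLamForm hab hbc hac
  rw [← hνν, ← hq, coeff_sum, Finset.sum_congr rfl fun i _ => hsq i] at hcoeff
  linarith [Finset.sum_nonneg fun i (_ : i ∈ Finset.univ) => sq_nonneg (coeff ν (q i))]

end ChoiLam

lemma constantCoeff_aeval {σ τ R : Type*} [CommSemiring R] (f : σ → MvPolynomial τ R)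
    (q : MvPolynomial σ R) : constantCoeff (aeval f q) = eval (fun i => constantCoeff (f i)) q := by
  rw [aeval_eq_bind₁, ← eval_zero, eval, eval₂Hom_bind₁, eval]

section BadPoint

variable {σ ι : Type*} [Fintype σ] [Fintype ι]

lemma prod_X_sq_eq_monomial_sq :
    ∏ i : σ, (X i : MvPolynomial σ ℝ) ^ 2 = monomial (∑ i, single i 1) 1 ^ 2 := by
  rw [Finset.prod_pow, monomial_sum_index, C_1, one_mul]
  rfl

lemma isHomogeneous_prod_X_sq {R : Type*} [CommSemiring R] :
    (∏ i : σ, (X i : MvPolynomial σ R) ^ 2).IsHomogeneous (2 * Fintype.card σ) := by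
  simpa [mul_comm] using IsHomogeneous.prod Finset.univ (fun i => (X i : MvPolynomial σ R) ^ 2)
    (fun _ => 2) fun i _ => isHomogeneous_X_pow i 2

lemma eval_single_eq_zero_of_sq_mul_eq_sum_sq [DecidableEq σ] {a b c i₀ : σ} (hab : a ≠ b)
    (hbc : b ≠ c) (hac : a ≠ c) (ha : a ≠ i₀) (hb : b ≠ i₀) (hc : c ≠ i₀) {q : MvPolynomial σ ℝ}
    {r : ι → MvPolynomial σ ℝ} (h : q ^ 2 * ((∏ i, X i ^ 2) * choiLamForm a b c) = ∑ i, r i ^ 2) :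
    eval (Pi.single i₀ 1) q = 0 := by
  obtain ⟨t, ht⟩ := exists_sum_sq_of_monomial_sq_mul_eq_sum_sq (B := q ^ 2 * choiLamForm a b c)
    (by rw [← h, prod_X_sq_eq_monomial_sq]; ring)
  set φ := aeval (R := ℝ) (Function.update X i₀ (1 : MvPolynomial σ ℝ))
  have hφM : φ (choiLamForm a b c) = choiLamForm a b c := by
    simp only [φ, choiLamForm, map_sub, map_add, map_mul, map_pow, map_ofNat, aeval_X,
      Function.update_of_ne ha, Function.update_of_ne hb, Function.update_of_ne hc]
  have hφq : constantCoeff (φ q) = eval (Pi.single i₀ 1) q := by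
    rw [constantCoeff_aeval]
    congr 2
    funext i
    by_cases hi : i = i₀ <;> simp [hi]
  have hφt : φ q ^ 2 * choiLamForm a b c = ∑ i, φ (t i) ^ 2 := by
    simpa only [map_mul, map_pow, map_sum, hφM] using congrArg φ ht
  by_contra hne
  obtain ⟨s, hs⟩ := exists_sum_sq_of_sq_mul_eq_sum_sq isHomogeneous_choiLamForm (hφq ▸ hne) hφt
  exact sum_sq_ne_choiLamForm hab hbc hac s hs.symm

end BadPoint

end MvPolynomial

theorem stmt6 (k : ℕ) (hk : 4 ≤ k) :
    ∃ p : MvPolynomial (Fin k) ℝ,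
      p = (∏ i, X i ^ 2) *
          (X (⟨1, by omega⟩ : Fin k) ^ 4 * X (⟨2, by omega⟩ : Fin k) ^ 2 +
           X (⟨2, by omega⟩ : Fin k) ^ 4 * X (⟨3, by omega⟩ : Fin k) ^ 2 +
           X (⟨3, by omega⟩ : Fin k) ^ 4 * X (⟨1, by omega⟩ : Fin k) ^ 2 -
           3 * (X (⟨1, by omega⟩ : Fin k) ^ 2 * X (⟨2, by omega⟩ : Fin k) ^ 2 *
                X (⟨3, by omega⟩ : Fin k) ^ 2)) ∧
      (∀ v : Fin k → ℝ, 0 ≤ eval v p) ∧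
      p.IsHomogeneous (2 * k + 6) ∧
      (∏ i, X i ^ 2) ∣ p ∧
      ¬ IsSOS p ∧
      -- (1,0,…,0) is a bad point for p
      (∀ q : MvPolynomial (Fin k) ℝ, IsSOS (q ^ 2 * p) →
        eval (fun i : Fin k => if i.val = 0 then (1 : ℝ) else 0) q = 0) := by
  set i₀ : Fin k := ⟨0, by omega⟩
  set a : Fin k := ⟨1, by omega⟩
  set b : Fin k := ⟨2, by omega⟩
  set c : Fin k := ⟨3, by omega⟩
  have hbad (q : MvPolynomial (Fin k) ℝ)
      (hq : IsSOS (q ^ 2 * ((∏ i, X i ^ 2) * choiLamForm a b c))) :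
      eval (Pi.single i₀ 1) q = 0 := by
    obtain ⟨_, r, hr⟩ := hq
    exact eval_single_eq_zero_of_sq_mul_eq_sum_sq (by simp [a, b]) (by simp [b, c])
      (by simp [a, c]) (by simp [a, i₀]) (by simp [b, i₀]) (by simp [c, i₀]) hr
  have hpt : (fun i : Fin k => if i.val = 0 then (1 : ℝ) else 0) = Pi.single i₀ 1 := by
    funext i
    simp [Pi.single_apply, Fin.ext_iff, i₀]
  refine ⟨(∏ i, X i ^ 2) * choiLamForm a b c, rfl, fun v => ?_, ?_, dvd_mul_right _ _,
    fun hp => ?_, fun q hq => hpt ▸ hbad q hq⟩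
  · rw [eval_mul, map_prod]
    exact mul_nonneg (Finset.prod_nonneg fun i _ => by simp only [map_pow, eval_X]; positivity)
      (eval_choiLamForm_nonneg v)
  · have hprod := isHomogeneous_prod_X_sq (σ := Fin k) (R := ℝ)
    rw [Fintype.card_fin] at hprod
    exact hprod.mul isHomogeneous_choiLamForm
  · simpa using hbad 1 (by simpa using hp)
end

section
/- For every k ≥ 6 there exists a stringent graph on k vertices: a graph H such that (1) H has no homogeneous vertex subset W with 1 < |W| ≤ |V(H)|−1, where W is homogeneous if all vertices of W have the same neighborhood outside W, and (2) H has no non-trivial automorphism. -/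
/-!
Take the path `0 - 1 - ⋯ - (k-1)` with the extra chord `{1, 3}`. Since the graph is connected,
a proper homogeneous set `W` has an outside vertex `x` adjacent to every vertex of `W`, so `W`
lies in the neighbourhood of `x`, which has at most three vertices; a short case check then finds
a vertex outside `W` adjacent to exactly one of two given members of `W`.

An automorphism permutes the two leaves `0` and `k-1`; it cannot swap them, since the vertex `1`
next to `0` has three neighbours and the vertex `k-2` next to `k-1` only two. Once `0` is fixed,
the vertices are fixed one by one along the path, each being the only neighbour of its
predecessor that is not yet known to be fixed. The one exception is `2`, which could a priori
be swapped with `3`; but then `4` would have to go to a neighbour of `2` other than `1` and `3`.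
-/

open SimpleGraph

/-- A set `W` of vertices is homogeneous in `H` if all vertices of `W` have the same
neighborhood outside `W`. -/
def IsHomogSet {V : Type*} (H : SimpleGraph V) (W : Set V) : Prop :=
  ∀ u ∈ W, ∀ v ∈ W, ∀ x ∉ W, (H.Adj u x ↔ H.Adj v x)

/-- A graph is stringent if it has no homogeneous set `W` with `1 < |W| ≤ |V|−1`
and no non-trivial automorphism. -/
def Stringent {V : Type*} [Fintype V] (H : SimpleGraph V) : Prop :=
  (∀ W : Set V, 1 < W.ncard → W.ncard ≤ Fintype.card V - 1 → ¬ IsHomogSet H W) ∧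
  (∀ φ : H ≃g H, ∀ v, φ v = v)

theorem IsHomogSet.exists_forall_adj {V : Type*} {G : SimpleGraph V} (hG : G.Preconnected)
    {W : Set V} (hW : IsHomogSet G W) {w y : V} (hw : w ∈ W) (hy : y ∉ W) :
    ∃ x ∉ W, ∀ u ∈ W, G.Adj u x := by
  obtain ⟨d, -, hd, hd'⟩ := (hG w y).some.exists_boundary_dart W hw hy
  exact ⟨d.snd, hd', fun u hu => (hW u hu d.fst hd d.snd hd').2 d.adj⟩

theorem SimpleGraph.Iso.apply_eq_self_of_adj {V : Type*} {G : SimpleGraph V} (φ : G ≃g G)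
    {v w : V} (hv : φ v = v) (hvw : G.Adj v w) (hfix : ∀ u, G.Adj v u → u ≠ w → φ u = u) :
    φ w = w := by
  by_contra hw
  have hadj : G.Adj v (φ w) := by simpa [hv] using φ.map_adj_iff.2 hvw
  exact hw (φ.injective (hfix (φ w) hadj hw))

/-- For `k = 5` the reflection `i ↦ 4 - i` is an automorphism; hence `6 ≤ k` below. -/
def pathWithChord (k : ℕ) : SimpleGraph (Fin k) where
  Adj i j := i.val + 1 = j.val ∨ j.val + 1 = i.val ∨ (i.val = 1 ∧ j.val = 3) ∨
    (i.val = 3 ∧ j.val = 1)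
  symm := ⟨by omega⟩
  loopless := ⟨by omega⟩

namespace pathWithChord

variable {k : ℕ}

theorem adj_iff {i j : Fin k} : (pathWithChord k).Adj i j ↔ i.val + 1 = j.val ∨
    j.val + 1 = i.val ∨ (i.val = 1 ∧ j.val = 3) ∨ (i.val = 3 ∧ j.val = 1) :=
  Iff.rfl

instance : DecidableRel (pathWithChord k).Adj := fun _ _ => decidable_of_iff' _ adj_iff

theorem preconnected : (pathWithChord k).Preconnected :=
  (pathGraph_preconnected k).mono fun _ _ h => by rw [pathGraph_adj] at h; rw [adj_iff]; omega

theorem not_isHomogSet (hk : 6 ≤ k) {W : Set (Fin k)} {x u v : Fin k}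
    (hWx : ∀ w ∈ W, (pathWithChord k).Adj w x) (hu : u ∈ W) (hv : v ∈ W) (huv : u ≠ v) :
    ¬ IsHomogSet (pathWithChord k) W := by
  intro hW
  -- A non-neighbour `y` of `x` lies outside `W`, so it cannot separate two members of `W`.
  -- The candidates `0`, `4`, `5`, `x - 2` rule out every pair of neighbours of `x` except
  -- `{0, 2}` for `x = 1`; that pair is separated by `3`, or else `3 ∈ W` and `4` separates `0`
  -- or `2` from `3`.
  have separate : ∀ a ∈ W, ∀ y, ¬ (pathWithChord k).Adj y x →
      ((pathWithChord k).Adj a y ↔ (pathWithChord k).Adj u y) :=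
    fun a ha y hy => hW a ha u hu y fun hyW => hy (hWx y hyW)
  have hux := hWx u hu
  have hvx := hWx v hv
  have huv' := Fin.val_ne_of_ne huv
  have h0 := separate v hv ⟨0, by omega⟩
  have h4 := separate v hv ⟨4, by omega⟩
  have h5 := separate v hv ⟨5, by omega⟩
  have h2 := separate v hv ⟨x.val - 2, by omega⟩
  have h3_mem := fun h3 : (⟨3, by omega⟩ : Fin k) ∈ W => separate _ h3 ⟨4, by omega⟩
  have h3_not_mem := hW v hv u hu ⟨3, by omega⟩
  simp only [adj_iff] at hux hvx h0 h4 h5 h2 h3_mem h3_not_mem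
  grind

theorem degree_zero (hk : 2 ≤ k) : (pathWithChord k).degree ⟨0, by omega⟩ = 1 :=
  degree_eq_one_iff_existsUnique_adj.2
    ⟨⟨1, by omega⟩, by simp [adj_iff],
      fun j hj => Fin.ext (by simp only [adj_iff] at hj; simp; omega)⟩

theorem val_eq_zero_or_eq_sub_one_of_degree_eq_one {v : Fin k}
    (hv : (pathWithChord k).degree v = 1) : v.val = 0 ∨ v.val = k - 1 := by
  obtain ⟨w, -, hw⟩ := degree_eq_one_iff_existsUnique_adj.1 hv
  by_contra! h
  have hpred := hw ⟨v.val - 1, by omega⟩ (by simp only [adj_iff]; omega)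
  have hsucc := hw ⟨v.val + 1, by omega⟩ (Or.inl rfl)
  have := congrArg Fin.val (hpred.trans hsucc.symm)
  simp only at this
  omega

theorem apply_zero (hk : 6 ≤ k) (φ : pathWithChord k ≃g pathWithChord k) :
    φ ⟨0, by omega⟩ = ⟨0, by omega⟩ := by
  have hleaf :=
    val_eq_zero_or_eq_sub_one_of_degree_eq_one ((φ.degree_eq _).trans (degree_zero (by omega)))
  have hne : ∀ {i j : Fin k}, i ≠ j → (φ i).val ≠ (φ j).val :=
    (Fin.val_injective.comp φ.injective).ne
  have h01 := φ.map_adj_iff.2 (show (pathWithChord k).Adj ⟨0, by omega⟩ ⟨1, by omega⟩ by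
    simp [adj_iff])
  have h12 := φ.map_adj_iff.2 (show (pathWithChord k).Adj ⟨1, by omega⟩ ⟨2, by omega⟩ by
    simp [adj_iff])
  have h13 := φ.map_adj_iff.2 (show (pathWithChord k).Adj ⟨1, by omega⟩ ⟨3, by omega⟩ by
    simp [adj_iff])
  have h02 := hne (show (⟨0, by omega⟩ : Fin k) ≠ ⟨2, by omega⟩ by simp)
  have h03 := hne (show (⟨0, by omega⟩ : Fin k) ≠ ⟨3, by omega⟩ by simp)
  have h23 := hne (show (⟨2, by omega⟩ : Fin k) ≠ ⟨3, by omega⟩ by simp)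
  simp only [adj_iff] at h01 h12 h13
  simp only [Fin.ext_iff]
  omega

theorem apply_one (hk : 6 ≤ k) (φ : pathWithChord k ≃g pathWithChord k) :
    φ ⟨1, by omega⟩ = ⟨1, by omega⟩ :=
  Iso.apply_eq_self_of_adj φ (apply_zero hk φ) (by simp [adj_iff]) fun u hu h1 =>
    absurd (Fin.ext (by simp only [adj_iff] at hu; simp; omega)) h1

theorem apply_two (hk : 6 ≤ k) (φ : pathWithChord k ≃g pathWithChord k) :
    φ ⟨2, by omega⟩ = ⟨2, by omega⟩ := by
  have h0 := congrArg Fin.val (apply_zero hk φ)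
  have h1 := congrArg Fin.val (apply_one hk φ)
  have hne : ∀ {i j : Fin k}, i ≠ j → (φ i).val ≠ (φ j).val :=
    (Fin.val_injective.comp φ.injective).ne
  have h12 := φ.map_adj_iff.2 (show (pathWithChord k).Adj ⟨1, by omega⟩ ⟨2, by omega⟩ by
    simp [adj_iff])
  have h13 := φ.map_adj_iff.2 (show (pathWithChord k).Adj ⟨1, by omega⟩ ⟨3, by omega⟩ by
    simp [adj_iff])
  have h34 := φ.map_adj_iff.2 (show (pathWithChord k).Adj ⟨3, by omega⟩ ⟨4, by omega⟩ by
    simp [adj_iff])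
  have h20 := hne (show (⟨2, by omega⟩ : Fin k) ≠ ⟨0, by omega⟩ by simp)
  have h30 := hne (show (⟨3, by omega⟩ : Fin k) ≠ ⟨0, by omega⟩ by simp)
  have h41 := hne (show (⟨4, by omega⟩ : Fin k) ≠ ⟨1, by omega⟩ by simp)
  have h23 := hne (show (⟨2, by omega⟩ : Fin k) ≠ ⟨3, by omega⟩ by simp)
  have h24 := hne (show (⟨2, by omega⟩ : Fin k) ≠ ⟨4, by omega⟩ by simp)
  simp only [adj_iff] at h0 h1 h12 h13 h34
  simp only [Fin.ext_iff]
  omega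

theorem apply_eq_self (hk : 6 ≤ k) (φ : pathWithChord k ≃g pathWithChord k) (v : Fin k) :
    φ v = v := by
  induction v using WellFoundedLT.induction with | _ v ih => ?_
  obtain hv | hv | hv | hv : v.val = 0 ∨ v.val = 1 ∨ v.val = 2 ∨ 3 ≤ v.val := by omega
  · exact (Fin.ext hv : v = ⟨0, by omega⟩) ▸ apply_zero hk φ
  · exact (Fin.ext hv : v = ⟨1, by omega⟩) ▸ apply_one hk φ
  · exact (Fin.ext hv : v = ⟨2, by omega⟩) ▸ apply_two hk φ
  refine Iso.apply_eq_self_of_adj φ (v := ⟨v.val - 1, by omega⟩)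
    (ih _ (by simp [Fin.lt_def]; omega)) (by simp only [adj_iff]; omega) fun u hu huv => ih u ?_
  have := Fin.val_ne_of_ne huv
  simp only [adj_iff] at hu
  rw [Fin.lt_def]
  omega

end pathWithChord

theorem stmt8 (k : ℕ) (hk : 6 ≤ k) : ∃ H : SimpleGraph (Fin k), Stringent H := by
  refine ⟨pathWithChord k, fun W hW1 hWk hW => ?_, pathWithChord.apply_eq_self hk⟩
  obtain ⟨u, v, hu, hv, huv⟩ := (Set.one_lt_ncard_iff W.toFinite).1 hW1
  obtain ⟨y, hy⟩ : ∃ y, y ∉ W := by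
    by_contra! hW_univ
    rw [Set.eq_univ_of_forall hW_univ, Set.ncard_univ, Nat.card_eq_fintype_card,
      Fintype.card_fin] at hWk
    omega
  obtain ⟨x, -, hWx⟩ := hW.exists_forall_adj pathWithChord.preconnected hu hy
  exact pathWithChord.not_isHomogSet hk hWx hu hv huv hW
end

section
/- If H is a stringent graph, then the identity map is the only map from V(H) to V(H) that preserves both adjacency and non-adjacency. -/
open SimpleGraph

/-- If `H` is stringent, then the identity is the only map `V(H) → V(H)` preserving
both adjacency and non-adjacency. -/
theorem stmt10 {V : Type*} [Fintype V] (H : SimpleGraph V) (hH : Stringent H)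
    (φ : V → V) (hφ : ∀ u v, u ≠ v → (H.Adj u v ↔ H.Adj (φ u) (φ v))) :
    ∀ v, φ v = v := by
  classical
  by_cases hinj : Function.Injective φ
  · have hbij := Finite.injective_iff_bijective.mp hinj
    let e := Equiv.ofBijective φ hbij
    have hrel : ∀ a b : V, H.Adj (e a) (e b) ↔ H.Adj a b := by
      intro a b
      by_cases hab : a = b
      · subst hab; simp
      · exact (hφ a b hab).symm
    exact hH.2 ⟨e, fun {a b} => hrel a b⟩
  · exfalso
    obtain ⟨u, v, heq, hne⟩ := Function.not_injective_iff.mp hinj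
    have key : ∀ x : V, x ≠ u → x ≠ v → (H.Adj u x ↔ H.Adj v x) := by
      intro x hxu hxv
      refine (hφ u x (Ne.symm hxu)).trans ?_
      rw [heq]
      exact (hφ v x (Ne.symm hxv)).symm
    by_cases hcard : 3 ≤ Fintype.card V
    · have hW : IsHomogSet H {u, v} := by
        intro a ha b hb x hx
        simp only [Set.mem_insert_iff, Set.mem_singleton_iff, not_or] at ha hb hx
        rcases ha with rfl | rfl <;> rcases hb with rfl | rfl
        · rfl
        · exact key x hx.1 hx.2
        · exact (key x hx.1 hx.2).symm
        · rfl
      exact hH.1 {u, v} (by rw [Set.ncard_pair hne]; norm_num)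
        (by rw [Set.ncard_pair hne]; omega) hW
    · have hall : ∀ x : V, x = u ∨ x = v := by
        intro x
        by_contra h
        push_neg at h
        have h3 : ({x, u, v} : Finset V).card = 3 := by
          rw [Finset.card_insert_of_notMem (by simp [h.1, h.2]),
            Finset.card_insert_of_notMem (by simp [hne]), Finset.card_singleton]
        have := Finset.card_le_univ ({x, u, v} : Finset V)
        rw [h3] at this
        omega
      have hswap : ∀ a b : V, H.Adj (Equiv.swap u v a) (Equiv.swap u v b) ↔ H.Adj a b := by
        intro a b
        rcases hall a with rfl | rfl <;> rcases hall b with rfl | rfl <;>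
          simp [Equiv.swap_apply_left, Equiv.swap_apply_right, adj_comm]
      have := hH.2 ⟨Equiv.swap u v, fun {a b} => hswap a b⟩ u
      simp only [RelIso.coe_fn_mk, Equiv.swap_apply_left] at this
      exact hne this.symm
end

section
/- Let q(y₁,…,y_k) be a polynomial with integer coefficients. Then q(y₁,…,y_k) ≥ 0 for all positive integers y₁,…,y_k if and only if the polynomial p(x₁,…,x_k) := (Π_{i=1}^k (1−x_i)^{deg q}) · q(1/(1−x₁),…,1/(1−x_k)) is nonnegative for all x₁,…,x_k ∈ {1 − 1/n : n ∈ ℕ, n ≥ 1}. -/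
open MvPolynomial

lemma cast_eval (k : ℕ) (q : MvPolynomial (Fin k) ℤ) (n : Fin k → ℤ) :
    eval (fun i => ((n i : ℝ))) (q.map (Int.castRingHom ℝ)) = ((eval n q : ℤ) : ℝ) := by
  rw [eval_map]
  have := MvPolynomial.eval₂_comp_left (Int.castRingHom ℝ) (RingHom.id ℤ) n q
  rw [RingHom.comp_id, eval₂_id] at this
  exact this.symm

/-- `q(y₁,…,y_k) ≥ 0` for all positive integers iff the polynomial
`p(x) = (Π (1−x_i)^{deg q}) · q(1/(1−x₁),…,1/(1−x_k))` is nonnegative at all points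
with coordinates of the form `1 − 1/n`, `n` a positive integer. -/
theorem stmt12 (k : ℕ) (q : MvPolynomial (Fin k) ℤ) :
    (∀ y : Fin k → ℤ, (∀ i, 0 < y i) → 0 ≤ eval y q) ↔
    (∀ x : Fin k → ℝ, (∀ i, ∃ n : ℕ, 1 ≤ n ∧ x i = 1 - 1 / (n : ℝ)) →
      0 ≤ (∏ i, (1 - x i) ^ q.totalDegree) *
            eval (fun i => (1 - x i)⁻¹) (q.map (Int.castRingHom ℝ))) := by
  constructor
  · intro h x hx
    choose n hn1 hn2 using hx
    have h1 : ∀ i, (1 : ℝ) - x i = 1 / (n i : ℝ) := by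
      intro i; rw [hn2 i]; ring
    have hnpos : ∀ i, (0 : ℝ) < (n i : ℝ) := by
      intro i; exact_mod_cast Nat.lt_of_lt_of_le Nat.zero_lt_one (hn1 i)
    have h2 : (fun i => ((1 : ℝ) - x i)⁻¹) = fun i => (((n i : ℤ) : ℝ)) := by
      funext i; rw [h1 i]; push_cast; rw [one_div, inv_inv]
    rw [h2, cast_eval]
    apply mul_nonneg
    · apply Finset.prod_nonneg
      intro i _
      apply pow_nonneg
      rw [h1 i]
      positivity
    · have := h (fun i => (n i : ℤ)) (fun i => Int.natCast_pos.mpr (hn1 i))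
      exact_mod_cast this
  · intro h y hy
    set n : Fin k → ℕ := fun i => (y i).toNat with hn
    have hyn : ∀ i, ((n i : ℤ)) = y i := fun i => Int.toNat_of_nonneg (hy i).le
    have hn1 : ∀ i, 1 ≤ n i := by
      intro i
      have := hy i
      simp only [hn]
      omega
    have hnpos : ∀ i, (0 : ℝ) < (n i : ℝ) := by
      intro i; exact_mod_cast Nat.lt_of_lt_of_le Nat.zero_lt_one (hn1 i)
    set x : Fin k → ℝ := fun i => 1 - 1 / (n i : ℝ) with hx
    have h1 : ∀ i, (1 : ℝ) - x i = 1 / (n i : ℝ) := by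
      intro i; simp only [hx]; ring
    have h2 : (fun i => ((1 : ℝ) - x i)⁻¹) = fun i => ((y i : ℝ)) := by
      funext i; rw [h1 i, one_div, inv_inv, ← hyn i]; push_cast; ring
    have := h x (fun i => ⟨n i, hn1 i, rfl⟩)
    rw [h2, cast_eval] at this
    have hprod : 0 < ∏ i, (1 - x i) ^ q.totalDegree := by
      apply Finset.prod_pos
      intro i _
      apply pow_pos
      rw [h1 i]
      exact one_div_pos.mpr (hnpos i)
    have := nonneg_of_mul_nonneg_right this hprod
    exact_mod_cast this
end

section
/- Let H be a stringent graph with vertex set [k], let n₁,…,n_k be positive integers, and let G be the graph obtained from H by replacing each vertex j by a clique W_j of size n_j (with complete bipartite connections between W_i and W_j exactly when ij ∈ E(H)). Then every map φ: V(H) → V(G) preserving both adjacency and non-adjacency satisfies φ(j) ∈ W_j for every j ∈ [k]. -/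
/-!
Call `u` and `v` twins if they have the same neighbours outside `{u, v}`. Twins are swapped by an
automorphism, so a stringent graph has no two distinct twins. Adjacency between distinct vertices
of the blow-up depends only on their cliques, so if `φ u = φ v`, or if `φ u` and `φ v` lie in the
same clique, then `u` and `v` are twins. Hence `j ↦ (φ j).1` is an injective, thus bijective,
self-map of `V(H)` preserving adjacency and non-adjacency: an automorphism of `H`, hence the identity.
-/

open SimpleGraph

/-- The blow-up of `H` where vertex `j` is replaced by a clique `W_j` on `n j`
vertices; two vertices are adjacent iff they lie in the same clique, or lie in
cliques `W_i`, `W_j` with `ij ∈ E(H)`. -/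
def blowup {k : ℕ} (H : SimpleGraph (Fin k)) (n : Fin k → ℕ) :
    SimpleGraph (Σ j : Fin k, Fin (n j)) where
  Adj x y := x ≠ y ∧ (x.1 = y.1 ∨ H.Adj x.1 y.1)
  symm := ⟨by
    rintro x y ⟨hne, h⟩
    refine ⟨hne.symm, ?_⟩
    rcases h with h | h
    · exact Or.inl h.symm
    · exact Or.inr h.symm⟩
  loopless := ⟨fun x h => h.1 rfl⟩

namespace SimpleGraph

variable {V W : Type*} {H : SimpleGraph V} {G : SimpleGraph W}

def IsTwins (H : SimpleGraph V) (u v : V) : Prop :=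
  ∀ x, x ≠ u → x ≠ v → (H.Adj u x ↔ H.Adj v x)

def IsTwins.swap [DecidableEq V] {u v : V} (h : H.IsTwins u v) : H ≃g H where
  toEquiv := Equiv.swap u v
  map_rel_iff' {a b} := by
    simp only [Equiv.swap_apply_def]
    grind [IsTwins, SimpleGraph.adj_comm, SimpleGraph.irrefl]

theorem isTwins_of_map_eq {f : V → W} (hf : ∀ u v, u ≠ v → (H.Adj u v ↔ G.Adj (f u) (f v)))
    {u v : V} (huv : f u = f v) : H.IsTwins u v := by
  intro x hxu hxv
  rw [hf u x hxu.symm, hf v x hxv.symm, huv]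

end SimpleGraph

section Blowup

variable {V : Type*} {H : SimpleGraph V} {k : ℕ} {H' : SimpleGraph (Fin k)} {n : Fin k → ℕ}

theorem blowup_adj_of_ne {x y : Σ j : Fin k, Fin (n j)} (hxy : x ≠ y) :
    (blowup H' n).Adj x y ↔ x.1 = y.1 ∨ H'.Adj x.1 y.1 :=
  and_iff_right hxy

theorem SimpleGraph.Embedding.isTwins_of_fst_eq_fst (f : H ↪g blowup H' n) {u v : V}
    (huv : (f u).1 = (f v).1) : H.IsTwins u v := by
  intro x hxu hxv
  rw [← f.map_adj_iff, ← f.map_adj_iff, blowup_adj_of_ne (f.injective.ne hxu.symm),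
    blowup_adj_of_ne (f.injective.ne hxv.symm), huv]

def SimpleGraph.Embedding.blowupFst (f : H ↪g blowup H' n)
    (hf : Function.Injective fun v => (f v).1) : H ↪g H' where
  toFun v := (f v).1
  inj' := hf
  map_rel_iff' {a b} := by
    rcases eq_or_ne a b with rfl | hab
    · simp
    change H'.Adj (f a).1 (f b).1 ↔ H.Adj a b
    rw [← f.map_adj_iff, blowup_adj_of_ne (f.injective.ne hab), or_iff_right (hf.ne hab)]

end Blowup

namespace Stringent

variable {V W : Type*} [Fintype V] {H : SimpleGraph V} {G : SimpleGraph W}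

theorem eq_of_isTwins (hH : Stringent H) {u v : V} (h : H.IsTwins u v) : u = v := by
  classical
  simpa [IsTwins.swap] using (hH.2 h.swap u).symm

def embeddingOfAdjIff (hH : Stringent H) (f : V → W)
    (hf : ∀ u v, u ≠ v → (H.Adj u v ↔ G.Adj (f u) (f v))) : H ↪g G where
  toFun := f
  inj' _ _ huv := hH.eq_of_isTwins (isTwins_of_map_eq hf huv)
  map_rel_iff' {a b} := by
    rcases eq_or_ne a b with rfl | hab
    · simp
    exact (hf a b hab).symm

theorem blowup_fst_injective {k : ℕ} {H' : SimpleGraph (Fin k)} {n : Fin k → ℕ}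
    (hH : Stringent H) (f : H ↪g blowup H' n) : Function.Injective fun v => (f v).1 :=
  fun _ _ huv => hH.eq_of_isTwins (f.isTwins_of_fst_eq_fst huv)

theorem embedding_apply_eq (hH : Stringent H) (f : H ↪g H) (v : V) : f v = v :=
  hH.2 (RelIso.ofSurjective f (Finite.surjective_of_injective f.injective)) v

end Stringent

theorem stmt18_general (k : ℕ) (H : SimpleGraph (Fin k)) (hH : Stringent H)
    (n : Fin k → ℕ)
    (φ : Fin k → Σ j : Fin k, Fin (n j))
    (hφ : ∀ u v, u ≠ v → (H.Adj u v ↔ (blowup H n).Adj (φ u) (φ v))) :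
    ∀ j, (φ j).1 = j := by
  let f : H ↪g blowup H n := hH.embeddingOfAdjIff φ hφ
  exact hH.embedding_apply_eq (f.blowupFst (hH.blowup_fst_injective f))

theorem stmt18 (k : ℕ) (H : SimpleGraph (Fin k)) (hH : Stringent H)
    (n : Fin k → ℕ) (hn : ∀ j, 0 < n j)
    (φ : Fin k → Σ j : Fin k, Fin (n j))
    (hφ : ∀ u v, u ≠ v → (H.Adj u v ↔ (blowup H n).Adj (φ u) (φ v))) :
    ∀ j, (φ j).1 = j :=
  stmt18_general k H hH n φ hφ
end
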